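/- arXiv:1006.0514 — 2 statements merged into one kernel-verified Lean document; each statement's English description precedes it below -/
import Mathlib

section
/- Assume p is odd, (q, n) is admissible, and n > 1. If x, y ∈ AGL_1^{(n)}(q) have orders n and 2 respectively and have no common fixed point in F, then x and y generate AGL_1^{(n)}(q). -/
/-!
Translations have order `p`, so neither `x` nor `y` is one: `x` is a homothety
`v ↦ a (v - c) + c` with `a` of order `n`, and `y`, since `p` is odd, is the point reflection
`v ↦ -(v - d) + d`, where `c ≠ d` because `x` and `y` share no fixed point. The commutator
`y x y x⁻¹` is the translation by `2 (1 - a) (d - c) ≠ 0`, and conjugating a translation by `x`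
multiplies it by `a`. Hence the translation vectors in `⟨x, y⟩` form an additive subgroup of `F`
whose multiplicative stabilizer is a subring containing `a`. Admissibility forces every subfield
of `F` containing an element of order `n` to be `F` itself, so all translations lie in `⟨x, y⟩`,
and every `v ↦ a^k v + b` is a translation composed with `x^k`.
-/

open Equiv

theorem Nat.ne_of_pow_modEq_one {p e n : ℕ} (he : 1 ≤ e) (hmod : p ^ e ≡ 1 [MOD n])
    (hn : n ≠ 1) : n ≠ p := by
  rintro rfl
  rw [Nat.ModEq, Nat.pow_mod, Nat.mod_self, zero_pow (by omega), Nat.zero_mod,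
    Nat.one_mod_eq_one.mpr hn] at hmod
  exact zero_ne_one hmod

theorem Subgroup.exists_pow_eq_of_orderOf_eq_card {G : Type*} [Group G] [Finite G]
    {S : Subgroup G} {a u : G} (ha : a ∈ S) (hcard : orderOf a = Nat.card S) (hu : u ∈ S) :
    ∃ k : ℕ, a ^ k = u := by
  have hS : S = zpowers a := (eq_of_le_of_card_ge (zpowers_le.mpr ha)
    (by rw [Nat.card_zpowers, hcard])).symm
  exact mem_powers_iff_mem_zpowers.mpr (hS ▸ hu)

theorem Subring.inv_mem_of_finite {K : Type*} [DivisionRing K] [Finite K] (s : Subring K)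
    {x : K} (hx : x ∈ s) : x⁻¹ ∈ s := by
  rcases eq_or_ne x 0 with rfl | hx0
  · simp
  obtain ⟨y, hy⟩ := (Finite.isDomain_to_isField s).mul_inv_cancel
    (a := ⟨x, hx⟩) (by simpa [Subtype.ext_iff] using hx0)
  rw [inv_eq_of_mul_eq_one_right (congrArg Subtype.val hy)]
  exact y.2

theorem Subring.eq_top_of_orderOf_mem {F : Type*} [Field F] [Fintype F] {p e n : ℕ} [CharP F p]
    (hq : Fintype.card F = p ^ e) (hadm : e ∈ lowerBounds {i | 1 ≤ i ∧ p ^ i ≡ 1 [MOD n]})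
    (K : Subring F) {a : Fˣ} (ha : (a : F) ∈ K) (han : orderOf a = n) : K = ⊤ := by
  let L := K.toSubfield fun _ ↦ K.inv_mem_of_finite
  have : Fintype L := Fintype.ofFinite L
  have : CharP L p := L.subtype.charP Subtype.val_injective p
  obtain ⟨d, hp, hd⟩ := FiniteField.card L p
  have hpow : a ^ (p ^ (d : ℕ) - 1) = 1 := by
    have := FiniteField.pow_card_sub_one_eq_one (⟨a, ha⟩ : L) (by simp [Subtype.ext_iff])
    rw [hd] at this
    exact Units.ext (congrArg Subtype.val this)
  have hmod : p ^ (d : ℕ) ≡ 1 [MOD n] :=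
    ((Nat.modEq_iff_dvd' (Nat.one_le_pow _ _ hp.pos)).mpr
      (han ▸ orderOf_dvd_of_pow_eq_one hpow)).symm
  have hcard : Nat.card F ≤ Nat.card K.toAddSubgroup := by
    rw [Nat.card_eq_fintype_card, hq]
    exact (Nat.pow_le_pow_right hp.pos (hadm ⟨d.pos, hmod⟩)).trans_eq
      (hd.symm.trans (Nat.card_eq_fintype_card (α := L)).symm)
  exact Subring.toAddSubgroup_eq_top.mp (AddSubgroup.eq_top_of_le_card _ hcard)

namespace AddSubgroup

variable {R : Type*} [Ring R]

def mulStab (T : AddSubgroup R) : Subring R where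
  carrier := {r | ∀ t ∈ T, r * t ∈ T}
  mul_mem' {r s} hr hs t ht := by rw [mul_assoc]; exact hr _ (hs t ht)
  one_mem' t ht := by rwa [one_mul]
  add_mem' {r s} hr hs t ht := by rw [add_mul]; exact T.add_mem (hr t ht) (hs t ht)
  zero_mem' t _ := by rw [zero_mul]; exact T.zero_mem
  neg_mem' {r} hr t ht := by rw [neg_mul]; exact T.neg_mem (hr t ht)

theorem eq_top_of_mulStab_eq_top {K : Type*} [DivisionRing K] {T : AddSubgroup K}
    (hT : T.mulStab = ⊤) {t₀ : K} (ht₀ : t₀ ∈ T) (ht₀0 : t₀ ≠ 0) : T = ⊤ :=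
  eq_top_iff.mpr fun t _ ↦ by
    have : t * t₀⁻¹ ∈ T.mulStab := hT ▸ Subring.mem_top _
    simpa [ht₀0] using this t₀ ht₀

end AddSubgroup

section Translations

variable {F : Type*}

def translations [AddGroup F] (H : Subgroup (Perm F)) : AddSubgroup F :=
  H.toAddSubgroup.comap (AddAction.toPermHom F F)

theorem mem_translations [AddGroup F] {H : Subgroup (Perm F)} {t : F} :
    t ∈ translations H ↔ Equiv.addLeft t ∈ H := Iff.rfl

variable [Field F] {g x y : Perm F} {H : Subgroup (Perm F)} {a b c d : F}

theorem pow_char_eq_one_of_forall_eq_add (p : ℕ) [CharP F p] (hg : ∀ v, g v = v + b) :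
    g ^ p = 1 := by
  have : g = Equiv.addRight b := Perm.ext hg
  ext v
  simp [this]

theorem affine_coeff_ne_one {p : ℕ} [CharP F p] (hp : p.Prime) (hg : ∀ v, g v = a * v + b)
    (h1 : orderOf g ≠ 1) (hgp : orderOf g ≠ p) : a ≠ 1 := by
  rintro rfl
  have := orderOf_dvd_of_pow_eq_one
    (pow_char_eq_one_of_forall_eq_add (g := g) p (b := b) (by simpa using hg))
  exact (hp.eq_one_or_self_of_dvd _ this).elim h1 hgp

theorem eq_homothety_of_affine (ha : a ≠ 1) (hg : ∀ v, g v = a * v + b) :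
    ⇑g = AffineMap.homothety (b / (1 - a)) a := by
  have : 1 - a ≠ 0 := sub_ne_zero.mpr ha.symm
  ext v
  rw [hg, AffineMap.homothety_apply, vsub_eq_sub, vadd_eq_add, smul_eq_mul]
  field_simp
  ring

theorem apply_eq_of_eq_homothety (hg : ⇑g = AffineMap.homothety c a) (v : F) :
    g v = a * (v - c) + c :=
  congrFun hg v

theorem pow_apply_of_eq_homothety (hg : ⇑g = AffineMap.homothety c a) (k : ℕ) (v : F) :
    (g ^ k) v = a ^ k * (v - c) + c := by
  induction k generalizing v with
  | zero => simp
  | succ k ih => rw [pow_succ', Perm.mul_apply, ih, apply_eq_of_eq_homothety hg]; ring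

theorem orderOf_eq_of_eq_homothety (hg : ⇑g = AffineMap.homothety c a) :
    orderOf g = orderOf a :=
  orderOf_eq_orderOf_iff.mpr fun k ↦ by
    constructor
    · intro h
      have := pow_apply_of_eq_homothety hg k (c + 1)
      simp only [h, Perm.one_apply, add_sub_cancel_left, mul_one] at this
      linear_combination -this
    · intro h
      ext v
      simp [pow_apply_of_eq_homothety hg, h]

theorem conj_addLeft_of_eq_homothety (hg : ⇑g = AffineMap.homothety c a) (t : F) :
    g * Equiv.addLeft t * g⁻¹ = Equiv.addLeft (a * t) := by
  rw [mul_inv_eq_iff_eq_mul]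
  ext v
  simp only [Perm.mul_apply, coe_addLeft, apply_eq_of_eq_homothety hg]
  ring

theorem commutator_eq_addLeft_of_eq_homothety (hx : ⇑x = AffineMap.homothety c a)
    (hy : ⇑y = AffineMap.homothety d (-1 : F)) :
    y * x * y * x⁻¹ = Equiv.addLeft (2 * (1 - a) * (d - c)) := by
  rw [mul_inv_eq_iff_eq_mul]
  ext v
  simp only [Perm.mul_apply, coe_addLeft, apply_eq_of_eq_homothety hx,
    apply_eq_of_eq_homothety hy]
  ring

theorem eq_addLeft_mul_pow_of_eq_homothety (hx : ⇑x = AffineMap.homothety c a) {k : ℕ}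
    (hg : ∀ v, g v = a ^ k * v + b) : g = Equiv.addLeft (b - (1 - a ^ k) * c) * x ^ k := by
  ext v
  simp only [Perm.mul_apply, coe_addLeft, hg, pow_apply_of_eq_homothety hx]
  ring

theorem mul_mem_translations_of_eq_homothety (hg : ⇑g = AffineMap.homothety c a) (hgH : g ∈ H)
    {t : F} (ht : t ∈ translations H) : a * t ∈ translations H := by
  rw [mem_translations, ← conj_addLeft_of_eq_homothety hg]
  exact H.mul_mem (H.mul_mem hgH ht) (H.inv_mem hgH)

theorem translations_eq_top_of_eq_homothety (hx : ⇑x = AffineMap.homothety c a) (hxH : x ∈ H)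
    (hy : ⇑y = AffineMap.homothety d (-1 : F)) (hyH : y ∈ H) (h2 : (2 : F) ≠ 0) (ha : a ≠ 1)
    (hcd : d ≠ c) (hgen : ∀ K : Subring F, a ∈ K → K = ⊤) : translations H = ⊤ := by
  refine AddSubgroup.eq_top_of_mulStab_eq_top (t₀ := 2 * (1 - a) * (d - c))
    (hgen _ fun _ ↦ mul_mem_translations_of_eq_homothety hx hxH) ?_ ?_
  · rw [mem_translations, ← commutator_eq_addLeft_of_eq_homothety hx hy]
    exact H.mul_mem (H.mul_mem (H.mul_mem hyH hxH) hyH) (H.inv_mem hxH)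
  · exact mul_ne_zero (mul_ne_zero h2 (sub_ne_zero.mpr ha.symm)) (sub_ne_zero.mpr hcd)

theorem mem_of_translations_eq_top (hx : ⇑x = AffineMap.homothety c a) (hxH : x ∈ H)
    (hT : translations H = ⊤) {k : ℕ} (hg : ∀ v, g v = a ^ k * v + b) : g ∈ H := by
  rw [eq_addLeft_mul_pow_of_eq_homothety hx hg]
  exact H.mul_mem (mem_translations.mp (hT ▸ AddSubgroup.mem_top _)) (H.pow_mem hxH k)

end Translations

theorem AGL_generated_by_order_n_and_involution_general
    (p e n : ℕ) (hp : p.Prime) (hodd : Odd p)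
    (F : Type) [Field F] [Fintype F] (hq : Fintype.card F = p ^ e)
    (S : Subgroup Fˣ) (hS : Nat.card S = n)
    (hadm : IsLeast {i : ℕ | 1 ≤ i ∧ p ^ i ≡ 1 [MOD n]} e)
    (hn1 : 1 < n)
    (A : Subgroup (Equiv.Perm F))
    (hA : ∀ g : Equiv.Perm F,
      g ∈ A ↔ ∃ a ∈ S, ∃ b : F, ∀ v : F, g v = (a : F) * v + b)
    (x y : Equiv.Perm F) (hx : x ∈ A) (hy : y ∈ A)
    (hxo : orderOf x = n) (hyo : orderOf y = 2)
    (hfix : ¬ ∃ v : F, x v = v ∧ y v = v) :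
    Subgroup.closure ({x, y} : Set (Equiv.Perm F)) = A := by
  have := Fact.mk hp
  have : CharP F p := charP_of_card_eq_prime_pow hq
  have hp2 : p ≠ 2 := by rintro rfl; norm_num at hodd
  set H := Subgroup.closure ({x, y} : Set (Equiv.Perm F))
  have hxH : x ∈ H := Subgroup.subset_closure (Set.mem_insert x _)
  have hyH : y ∈ H := Subgroup.subset_closure (Set.mem_insert_of_mem x rfl)
  obtain ⟨a, haS, b, hxab⟩ := (hA x).mp hx
  obtain ⟨a', -, b', hyab⟩ := (hA y).mp hy
  have ha1 := affine_coeff_ne_one hp hxab (by omega)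
    (hxo ▸ Nat.ne_of_pow_modEq_one hadm.1.1 hadm.1.2 hn1.ne')
  have hx' := eq_homothety_of_affine ha1 hxab
  have hy' :=
    eq_homothety_of_affine (affine_coeff_ne_one hp hyab (by omega) (hyo ▸ hp2.symm)) hyab
  have ha : orderOf a = n := by rw [← orderOf_units, ← orderOf_eq_of_eq_homothety hx', hxo]
  rw [(CharP.orderOf_eq_two_iff p hp2 (x := (a' : F))).mp
    (by rw [← orderOf_eq_of_eq_homothety hy', hyo])] at hy'
  set c := b / (1 - a)
  set d := b' / (1 - -1)
  have hcd : d ≠ c := fun h ↦ hfix ⟨c, by rw [hx', AffineMap.homothety_apply_same],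
    by rw [hy', ← h, AffineMap.homothety_apply_same]⟩
  have hT := translations_eq_top_of_eq_homothety hx' hxH hy' hyH
    (Ring.two_ne_zero (by rwa [ringChar.eq F p])) ha1 hcd
    fun K hK ↦ Subring.eq_top_of_orderOf_mem hq hadm.2 K hK ha
  refine le_antisymm ((Subgroup.closure_le A).mpr (Set.pair_subset hx hy)) fun g hg ↦ ?_
  obtain ⟨u, huS, b'', hg⟩ := (hA g).mp hg
  obtain ⟨k, rfl⟩ := Subgroup.exists_pow_eq_of_orderOf_eq_card haS (ha.trans hS.symm) huS
  exact mem_of_translations_eq_top hx' hxH hT (by simpa using hg)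

/-- Let `p` be an odd prime, `e ≥ 1`, `q = p^e`, `F` a finite field
with `q` elements, `n` an even divisor of `q - 1`, and `S` the subgroup of order `n`
of `Fˣ`.  Assume `(q, n)` is admissible and `n > 1`, and let `A = AGL₁⁽ⁿ⁾(q)` be the
subgroup of `Perm F` of affine maps `v ↦ a v + b` with `a ∈ S`, `b ∈ F`.  If
`x, y ∈ A` have orders `n` and `2` respectively and have no common fixed point in `F`,
then `x` and `y` generate `A`. -/
theorem AGL_generated_by_order_n_and_involution
    (p e n : ℕ) (hp : p.Prime) (hodd : Odd p) (he : 1 ≤ e)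
    (F : Type) [Field F] [Fintype F] (hq : Fintype.card F = p ^ e)
    (hn : n ∣ p ^ e - 1) (hneven : Even n)
    (S : Subgroup Fˣ) (hS : Nat.card S = n)
    (hadm : IsLeast {i : ℕ | 1 ≤ i ∧ p ^ i ≡ 1 [MOD n]} e)
    (hn1 : 1 < n)
    (A : Subgroup (Equiv.Perm F))
    (hA : ∀ g : Equiv.Perm F,
      g ∈ A ↔ ∃ a ∈ S, ∃ b : F, ∀ v : F, g v = (a : F) * v + b)
    (x y : Equiv.Perm F) (hx : x ∈ A) (hy : y ∈ A)
    (hxo : orderOf x = n) (hyo : orderOf y = 2)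
    (hfix : ¬ ∃ v : F, x v = v ∧ y v = v) :
    Subgroup.closure ({x, y} : Set (Equiv.Perm F)) = A :=
  AGL_generated_by_order_n_and_involution_general p e n hp hodd F hq S hS hadm hn1 A hA x y hx hy
    hxo hyo hfix
end

section
/- Assume (q, n) is admissible. Then the natural action of AGL_1^{(n)}(q) on F is primitive: it is transitive, and the stabiliser of each point of F is a maximal subgroup of AGL_1^{(n)}(q). -/
/-!
Write `A = T ⋊ S`, with `T` the translations of `F` and `S` acting by multiplication as the
stabiliser of a point `v`. A subgroup `H` strictly above the stabiliser contains a nonzero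
translation, and since conjugating the translation by `c` with `x ↦ a x + b` gives the translation
by `a c`, the vectors of the translations in `H` form a module over the subring generated by `S`.
Admissibility makes that subring all of `F`: it is a subfield `𝔽_{p^m}` containing an element of
order `n`, so `p ^ m ≡ 1 [MOD n]` and `m ≥ e`. Hence `H` contains every translation, so `H = A`.
-/

open Equiv

theorem Subgroup.card_dvd_card_subring_sub_one {F : Type*} [Field F] [Finite F]
    (S : Subgroup Fˣ) (K : Subring F) (hSK : ∀ s ∈ S, (s : F) ∈ K) :
    Nat.card S ∣ Nat.card K - 1 := by
  classical
  have : Fintype K := Fintype.ofFinite K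
  let _ : Field K := Fintype.fieldOfDomain K
  rw [← IsCyclic.exponent_eq_card, Nat.card_eq_fintype_card]
  refine Monoid.exponent_dvd_of_forall_pow_eq_one fun s => Subtype.ext <| Units.ext ?_
  have hs : (⟨((s : Fˣ) : F), hSK s s.2⟩ : K) ^ (Fintype.card K - 1) = 1 :=
    FiniteField.pow_card_sub_one_eq_one _ fun h => (s : Fˣ).ne_zero (congrArg Subtype.val h)
  simpa using congrArg Subtype.val hs

theorem Subgroup.subringClosure_eq_top_of_isLeast {F : Type*} [Field F] [Finite F]
    {p e : ℕ} (hp : p.Prime) (hq : Nat.card F = p ^ e) (S : Subgroup Fˣ)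
    (hadm : IsLeast {i : ℕ | 1 ≤ i ∧ p ^ i ≡ 1 [MOD Nat.card S]} e) :
    Subring.closure (Units.val '' (S : Set Fˣ)) = ⊤ := by
  set K := Subring.closure (Units.val '' (S : Set Fˣ))
  obtain ⟨m, hme, hK⟩ := (Nat.dvd_prime_pow hp).mp
    (hq ▸ AddSubgroup.card_addSubgroup_dvd_card K.toAddSubgroup)
  replace hK : Nat.card K = p ^ m := hK
  have hm : 1 ≤ m := Nat.pos_of_ne_zero fun h0 => by
    simpa [h0, hK] using (Finite.one_lt_card : 1 < Nat.card K)
  have hdvd := S.card_dvd_card_subring_sub_one K fun s hs => Subring.subset_closure ⟨s, hs, rfl⟩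
  rw [hK] at hdvd
  have hem : e ≤ m := hadm.2 ⟨hm, ((Nat.modEq_iff_dvd' (Nat.one_le_pow _ _ hp.pos)).mpr hdvd).symm⟩
  have hcard : Nat.card K.toAddSubgroup = Nat.card F := by
    rw [hq, ← le_antisymm hme hem]
    exact hK
  exact Subring.toAddSubgroup_injective (AddSubgroup.eq_top_of_card_eq _ hcard)

def affinePerm {F : Type*} [Field F] (a : Fˣ) (b : F) : Perm F where
  toFun x := a * x + b
  invFun y := ↑a⁻¹ * (y - b)
  left_inv x := by simp
  right_inv y := by simp

def Subgroup.translationVectors {V : Type*} [AddGroup V] (G : Subgroup (Perm V)) :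
    AddSubgroup V where
  carrier := {c | Equiv.addRight c ∈ G}
  zero_mem' := by simp
  add_mem' {c d} hc hd := by simpa [Equiv.addRight_add] using G.mul_mem hd hc
  neg_mem' {c} hc := by
    have : Equiv.addRight (-c) = (Equiv.addRight c)⁻¹ := eq_inv_of_mul_eq_one_left <| by
      rw [← Equiv.addRight_add, add_neg_cancel, Equiv.addRight_zero]
    exact (this ▸ G.inv_mem hc : Equiv.addRight (-c) ∈ G)

section

variable {F : Type*} [Field F]

@[simp]
theorem affinePerm_apply (a : Fˣ) (b x : F) : affinePerm a b x = a * x + b := rfl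

theorem affinePerm_mul_addRight (a : Fˣ) (b c : F) :
    affinePerm a b * Equiv.addRight c = Equiv.addRight (a * c) * affinePerm a b := by
  ext
  simp
  ring

theorem affinePerm_eq_addRight_mul (a : Fˣ) (b v : F) :
    affinePerm a b = Equiv.addRight (affinePerm a b v - v) * affinePerm a (v - a * v) := by
  ext
  simp
  ring

theorem affinePerm_sub_mul_self_apply (a : Fˣ) (v : F) : affinePerm a (v - a * v) v = v := by
  simp

theorem Subgroup.mul_mem_translationVectors {G : Subgroup (Perm F)} {S : Subgroup Fˣ}
    (hG : ∀ a ∈ S, ∃ b, affinePerm a b ∈ G) {x : F}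
    (hx : x ∈ Subring.closure (Units.val '' (S : Set Fˣ))) {c : F}
    (hc : c ∈ G.translationVectors) : x * c ∈ G.translationVectors := by
  induction hx using Subring.closure_induction generalizing c with
  | mem _ hx =>
    obtain ⟨a, ha, rfl⟩ := hx
    obtain ⟨b, hb⟩ := hG a ha
    have : Equiv.addRight (a * c) = affinePerm a b * Equiv.addRight c * (affinePerm a b)⁻¹ := by
      rw [affinePerm_mul_addRight, mul_inv_cancel_right]
    show Equiv.addRight _ ∈ G
    rw [this]
    exact G.mul_mem (G.mul_mem hb hc) (G.inv_mem hb)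
  | zero => simp
  | one => simpa using hc
  | add _ _ _ _ hx hy => simpa [add_mul] using add_mem (hx hc) (hy hc)
  | neg _ _ hx => simpa using neg_mem (hx hc)
  | mul _ _ _ _ hx hy => simpa [mul_assoc] using hx (hy hc)

theorem Subgroup.translationVectors_eq_top {G : Subgroup (Perm F)} {S : Subgroup Fˣ}
    (hS : Subring.closure (Units.val '' (S : Set Fˣ)) = ⊤)
    (hG : ∀ a ∈ S, ∃ b, affinePerm a b ∈ G) {c : F} (hc0 : c ≠ 0)
    (hc : c ∈ G.translationVectors) : G.translationVectors = ⊤ := by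
  refine eq_top_iff.mpr fun d _ => ?_
  have := mul_mem_translationVectors hG (hS ▸ Subring.mem_top (d / c)) hc
  rwa [div_mul_cancel₀ d hc0] at this

def IsAffineGroupOf (S : Subgroup Fˣ) (A : Subgroup (Perm F)) : Prop :=
  ∀ g : Perm F, g ∈ A ↔ ∃ a ∈ S, ∃ b : F, ∀ v : F, g v = a * v + b

namespace IsAffineGroupOf

variable {S : Subgroup Fˣ} {A : Subgroup (Perm F)}

theorem affinePerm_mem (hA : IsAffineGroupOf S A) {a : Fˣ} (ha : a ∈ S) (b : F) :
    affinePerm a b ∈ A :=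
  (hA _).mpr ⟨a, ha, b, fun _ => rfl⟩

theorem exists_affinePerm_eq (hA : IsAffineGroupOf S A) {g : Perm F} (hg : g ∈ A) :
    ∃ a ∈ S, ∃ b : F, affinePerm a b = g := by
  obtain ⟨a, ha, b, hab⟩ := (hA g).mp hg
  exact ⟨a, ha, b, Equiv.ext fun v => (hab v).symm⟩

theorem isCoatom_stabilizer_subgroupOf (hA : IsAffineGroupOf S A)
    (hS : Subring.closure (Units.val '' (S : Set Fˣ)) = ⊤) (v : F) :
    IsCoatom ((MulAction.stabilizer (Perm F) v).subgroupOf A) := by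
  refine ⟨fun htop => ?_, fun H hH => ?_⟩
  · have := Subgroup.subgroupOf_eq_top.mp htop (hA.affinePerm_mem S.one_mem 1)
    simp [MulAction.mem_stabilizer_iff] at this
  set G := H.map A.subtype
  have hstab : ∀ a ∈ S, affinePerm a (v - a * v) ∈ G := fun a ha =>
    ⟨⟨_, hA.affinePerm_mem ha (v - a * v)⟩, hH.le (affinePerm_sub_mul_self_apply a v), rfl⟩
  obtain ⟨g, hgH, hgv⟩ := SetLike.exists_of_lt hH
  obtain ⟨a, ha, b, hg⟩ := hA.exists_affinePerm_eq g.2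
  have hc : (g : Perm F) v - v ∈ G.translationVectors := by
    have := G.mul_mem (⟨g, hgH, rfl⟩ : (g : Perm F) ∈ G) (G.inv_mem (hstab a ha))
    rwa [← hg, affinePerm_eq_addRight_mul a b v, mul_inv_cancel_right, hg] at this
  have htop := Subgroup.translationVectors_eq_top hS (fun a ha => ⟨_, hstab a ha⟩)
    (sub_ne_zero.mpr hgv) hc
  refine (Subgroup.eq_top_iff' H).mpr fun g' => ?_
  obtain ⟨a', ha', b', hg'⟩ := hA.exists_affinePerm_eq g'.2
  rw [← Subgroup.mem_map_iff_mem A.subtype_injective, Subgroup.coe_subtype, ← hg',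
    affinePerm_eq_addRight_mul a' b' v]
  exact G.mul_mem (htop ▸ AddSubgroup.mem_top _ : _ ∈ G.translationVectors) (hstab a' ha')

end IsAffineGroupOf

end

theorem AGL_primitive_on_F_general
    (p e n : ℕ) (hp : p.Prime)
    (F : Type) [Field F] [Fintype F] (hq : Fintype.card F = p ^ e)
    (S : Subgroup Fˣ) (hS : Nat.card S = n)
    (hadm : IsLeast {i : ℕ | 1 ≤ i ∧ p ^ i ≡ 1 [MOD n]} e)
    (A : Subgroup (Equiv.Perm F))
    (hA : ∀ g : Equiv.Perm F,
      g ∈ A ↔ ∃ a ∈ S, ∃ b : F, ∀ v : F, g v = (a : F) * v + b) :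
    (∀ v w : F, ∃ g ∈ A, g v = w) ∧
      ∀ v : F, IsCoatom ((MulAction.stabilizer (Equiv.Perm F) v).subgroupOf A) := by
  have hA : IsAffineGroupOf S A := hA
  have hS : Subring.closure (Units.val '' (S : Set Fˣ)) = ⊤ :=
    S.subringClosure_eq_top_of_isLeast hp (Nat.card_eq_fintype_card.trans hq) (hS ▸ hadm)
  exact ⟨fun v w => ⟨affinePerm 1 (w - v), hA.affinePerm_mem S.one_mem _, by simp⟩,
    hA.isCoatom_stabilizer_subgroupOf hS⟩

/-- Let `p` be prime, `e ≥ 1`, `q = p^e`, `F` a finite field with `q`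
elements, `n` a divisor of `q - 1` (even if `p` is odd), and `S` the subgroup of order
`n` of `Fˣ`.  Assume `(q, n)` is admissible, and let `A = AGL₁⁽ⁿ⁾(q)` be the subgroup
of `Perm F` of affine maps `v ↦ a v + b` with `a ∈ S`, `b ∈ F`.  Then the natural
action of `A` on `F` is primitive: it is transitive, and the stabiliser of each point
of `F` is a maximal (proper) subgroup of `A`. -/
theorem AGL_primitive_on_F
    (p e n : ℕ) (hp : p.Prime) (he : 1 ≤ e)
    (F : Type) [Field F] [Fintype F] (hq : Fintype.card F = p ^ e)
    (hn : n ∣ p ^ e - 1) (hpar : Odd p → Even n)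
    (S : Subgroup Fˣ) (hS : Nat.card S = n)
    (hadm : IsLeast {i : ℕ | 1 ≤ i ∧ p ^ i ≡ 1 [MOD n]} e)
    (A : Subgroup (Equiv.Perm F))
    (hA : ∀ g : Equiv.Perm F,
      g ∈ A ↔ ∃ a ∈ S, ∃ b : F, ∀ v : F, g v = (a : F) * v + b) :
    (∀ v w : F, ∃ g ∈ A, g v = w) ∧
      ∀ v : F, IsCoatom ((MulAction.stabilizer (Equiv.Perm F) v).subgroupOf A) :=
  AGL_primitive_on_F_general p e n hp F hq S hS hadm A hA
end
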